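/- (Theorem 1) For every h ∈ ℝⁿ, the operator 2-norm of the Fréchet derivative of the GRU state-transition map F at h satisfies ‖D F(h)‖₂ ≤ α + β ‖U_c‖₂, where α = δ_u (max_i |h_i| + max_i |c(h)_i|) ‖U_u‖₂ + max_i (1 − u(h)_i) and β = (max_i u(h)_i)(δ_r ‖U_r‖₂ max_i |h_i| + max_i r(h)_i), with δ_u = max_i u(h)_i (1 − u(h)_i) and δ_r = max_i r(h)_i (1 − r(h)_i). -/

import Mathlib

/-!
By the chain and product rules, with `σ' = σ (1 - σ)` and `tanh' = 1 - tanh²`,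
`D F(h) = diag(1 - u) + diag(c - h) diag(u (1 - u)) U_u
  + diag(u) diag(1 - c²) U_c (diag(r) + diag(h) diag(r (1 - r)) U_r)`.
The Euclidean operator norm of a diagonal matrix is the largest modulus of its entries, so the
triangle inequality and submultiplicativity of the operator norm give the bound, using `|c| ≤ 1`.
-/

noncomputable section

/-- The sigmoid function `σ(t) = 1/(1+exp(-t))`. -/
def sigmoid (t : ℝ) : ℝ := 1 / (1 + Real.exp (-t))

/-- The operator norm of a square matrix induced by the Euclidean norm. -/
def opNorm2 {n : ℕ} (M : Matrix (Fin n) (Fin n) ℝ) : ℝ :=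
  ‖Matrix.toEuclideanCLM (𝕜 := ℝ) M‖

open WithLp Matrix ContinuousLinearMap

theorem sigmoid_eq_real_sigmoid : sigmoid = Real.sigmoid := by
  ext t
  rw [sigmoid, Real.sigmoid_def, one_div]

theorem sigmoid_mem_Icc (t : ℝ) : sigmoid t ∈ Set.Icc 0 1 :=
  sigmoid_eq_real_sigmoid ▸ ⟨Real.sigmoid_nonneg t, Real.sigmoid_le_one t⟩

theorem hasDerivAt_sigmoid (t : ℝ) : HasDerivAt sigmoid (sigmoid t * (1 - sigmoid t)) t := by
  rw [sigmoid_eq_real_sigmoid]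
  exact Real.hasDerivAt_sigmoid t

theorem Real.hasDerivAt_tanh (t : ℝ) : HasDerivAt Real.tanh (1 - Real.tanh t ^ 2) t := by
  rw [show Real.tanh = Real.sinh / Real.cosh from funext Real.tanh_eq_sinh_div_cosh]
  refine ((Real.hasDerivAt_sinh t).div (Real.hasDerivAt_cosh t)
    (Real.cosh_pos t).ne').congr_deriv ?_
  simp only [Pi.div_apply]
  field_simp

section Normed

variable {𝕜 E F G : Type*} [NontriviallyNormedField 𝕜] [NormedAddCommGroup E] [NormedSpace 𝕜 E]
  [NormedAddCommGroup F] [NormedSpace 𝕜 F] [NormedAddCommGroup G] [NormedSpace 𝕜 G]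

theorem ContinuousLinearMap.opNorm_comp_le_of_le {g : F →L[𝕜] G} {f : E →L[𝕜] F} {A B : ℝ}
    (hg : ‖g‖ ≤ A) (hf : ‖f‖ ≤ B) : ‖g ∘L f‖ ≤ A * B :=
  (opNorm_comp_le g f).trans (mul_le_mul hg hf (norm_nonneg f) ((norm_nonneg g).trans hg))

theorem hasFDerivAt_piLp {ι : Type*} {β : ι → Type*} [Finite ι] [∀ i, NormedAddCommGroup (β i)]
    [∀ i, NormedSpace 𝕜 (β i)] (p : ENNReal) [Fact (1 ≤ p)] {f : E → PiLp p β}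
    {f' : E →L[𝕜] PiLp p β} {y : E} :
    HasFDerivAt f f' y ↔ ∀ i, HasFDerivAt (fun x => f x i) (PiLp.proj _ _ i ∘L f') y := by
  simpa only [hasFDerivWithinAt_univ] using hasFDerivWithinAt_piLp p (t := Set.univ)

end Normed

section Euclidean

variable {ι E : Type*} [Fintype ι] [DecidableEq ι] [NormedAddCommGroup E] [NormedSpace ℝ E]

def diagCLM (a : ι → ℝ) : EuclideanSpace ℝ ι →L[ℝ] EuclideanSpace ℝ ι :=
  toEuclideanCLM (𝕜 := ℝ) (diagonal a)

@[simp]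
theorem diagCLM_apply (a : ι → ℝ) (v : EuclideanSpace ℝ ι) (i : ι) :
    diagCLM a v i = a i * v i := by
  simp [diagCLM, mulVec_diagonal]

theorem norm_diagCLM_le_iSup_abs (a : ι → ℝ) : ‖diagCLM a‖ ≤ ⨆ i, |a i| := by
  rw [diagCLM, l2_opNorm_toEuclideanCLM, l2_opNorm_diagonal]
  refine (pi_norm_le_iff_of_nonneg (Real.iSup_nonneg fun i => abs_nonneg (a i))).2 fun i => ?_
  exact le_ciSup (f := fun i => |a i|) (Set.finite_range _).bddAbove i

theorem norm_diagCLM_le_iSup {a : ι → ℝ} (ha : ∀ i, 0 ≤ a i) : ‖diagCLM a‖ ≤ ⨆ i, a i := by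
  simpa only [abs_of_nonneg (ha _)] using norm_diagCLM_le_iSup_abs a

theorem HasFDerivAt.hadamard {f g : E → EuclideanSpace ℝ ι} {f' g' : E →L[ℝ] EuclideanSpace ℝ ι}
    {y : E} (hf : HasFDerivAt f f' y) (hg : HasFDerivAt g g' y) :
    HasFDerivAt (fun y => toLp 2 fun i => f y i * g y i)
      (diagCLM (f y) ∘L g' + diagCLM (g y) ∘L f') y := by
  refine (hasFDerivAt_piLp 2).2 fun i => ?_
  refine (((hasFDerivAt_piLp 2).1 hf i).mul ((hasFDerivAt_piLp 2).1 hg i)).congr_fderiv ?_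
  ext v
  simp

theorem hasFDerivAt_entrywise_affine {φ : ℝ → ℝ} {d : ι → ℝ} (a b : ι → ℝ) (U : Matrix ι ι ℝ)
    (z : EuclideanSpace ℝ ι) (hφ : ∀ i, HasDerivAt φ (d i) (a i + U.mulVec z i + b i)) :
    HasFDerivAt (fun z : EuclideanSpace ℝ ι => toLp 2 fun i => φ (a i + U.mulVec z i + b i))
      (diagCLM d ∘L toEuclideanCLM (𝕜 := ℝ) U) z := by
  refine (hasFDerivAt_piLp 2).2 fun i => ?_
  have hrow : HasFDerivAt (fun z : EuclideanSpace ℝ ι => U.mulVec z i)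
      (PiLp.proj 2 _ i ∘L toEuclideanCLM (𝕜 := ℝ) U) z := by
    have hfun : (fun z : EuclideanSpace ℝ ι => U.mulVec z i) =
        PiLp.proj 2 _ i ∘L toEuclideanCLM (𝕜 := ℝ) U := by
      ext z
      simp
    rw [hfun]
    exact ContinuousLinearMap.hasFDerivAt _
  refine ((hφ i).comp_hasFDerivAt z ((hrow.const_add (a i)).add_const (b i))).congr_fderiv ?_
  ext v
  simp

/-- `D F(h)`, where `u`, `r`, `c` stand for the gate values `u(h)`, `r(h)`, `c(h)`. -/
def gruFDeriv (u r c h : ι → ℝ) (Ur Uu Uc : EuclideanSpace ℝ ι →L[ℝ] EuclideanSpace ℝ ι) :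
    EuclideanSpace ℝ ι →L[ℝ] EuclideanSpace ℝ ι :=
  diagCLM (fun i => 1 - u i) + (diagCLM c - diagCLM h) ∘L diagCLM (fun i => u i * (1 - u i)) ∘L Uu +
    diagCLM u ∘L diagCLM (fun i => 1 - c i ^ 2) ∘L Uc ∘L
      (diagCLM r + diagCLM h ∘L diagCLM (fun i => r i * (1 - r i)) ∘L Ur)

theorem norm_gruFDeriv_le {u r c : ι → ℝ} (h : ι → ℝ)
    (Ur Uu Uc : EuclideanSpace ℝ ι →L[ℝ] EuclideanSpace ℝ ι)
    (hu : ∀ i, u i ∈ Set.Icc 0 1) (hr : ∀ i, r i ∈ Set.Icc 0 1) (hc : ∀ i, |c i| ≤ 1) :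
    ‖gruFDeriv u r c h Ur Uu Uc‖ ≤
      (⨆ i, u i * (1 - u i)) * ((⨆ i, |h i|) + ⨆ i, |c i|) * ‖Uu‖ + (⨆ i, (1 - u i)) +
        (⨆ i, u i) * ((⨆ i, r i * (1 - r i)) * ‖Ur‖ * (⨆ i, |h i|) + ⨆ i, r i) * ‖Uc‖ := by
  have hdσ : ∀ {s : ι → ℝ}, (∀ i, s i ∈ Set.Icc 0 1) →
      ‖diagCLM fun i => s i * (1 - s i)‖ ≤ ⨆ i, s i * (1 - s i) := fun hs =>
    norm_diagCLM_le_iSup fun i => mul_nonneg (hs i).1 (sub_nonneg.2 (hs i).2)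
  have htanh : ‖diagCLM fun i => 1 - c i ^ 2‖ ≤ 1 :=
    (norm_diagCLM_le_iSup fun i => sub_nonneg.2 ((sq_le_one_iff_abs_le_one _).2 (hc i))).trans
      (Real.iSup_le (fun i => sub_le_self 1 (sq_nonneg _)) zero_le_one)
  have hh := norm_diagCLM_le_iSup_abs h
  have hupdate : ‖(diagCLM c - diagCLM h) ∘L diagCLM (fun i => u i * (1 - u i)) ∘L Uu‖ ≤
      ((⨆ i, |c i|) + ⨆ i, |h i|) * ((⨆ i, u i * (1 - u i)) * ‖Uu‖) :=
    opNorm_comp_le_of_le ((norm_sub_le _ _).trans (add_le_add (norm_diagCLM_le_iSup_abs c) hh))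
      (opNorm_comp_le_of_le (hdσ hu) le_rfl)
  have hcandidate : ‖diagCLM u ∘L diagCLM (fun i => 1 - c i ^ 2) ∘L Uc ∘L
      (diagCLM r + diagCLM h ∘L diagCLM (fun i => r i * (1 - r i)) ∘L Ur)‖ ≤
      (⨆ i, u i) * (1 * (‖Uc‖ * ((⨆ i, r i) + (⨆ i, |h i|) * ((⨆ i, r i * (1 - r i)) * ‖Ur‖)))) :=
    opNorm_comp_le_of_le (norm_diagCLM_le_iSup fun i => (hu i).1)
      (opNorm_comp_le_of_le htanh (opNorm_comp_le_of_le le_rfl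
        (norm_add_le_of_le (norm_diagCLM_le_iSup fun i => (hr i).1)
          (opNorm_comp_le_of_le hh (opNorm_comp_le_of_le (hdσ hr) le_rfl)))))
  calc _ ≤ _ := norm_add₃_le
    _ ≤ _ := add_le_add_three (norm_diagCLM_le_iSup fun i => sub_nonneg.2 (hu i).2)
      hupdate hcandidate
    _ = _ := by ring

end Euclidean

/-- Theorem 1: for every `h`, the operator 2-norm of the Fréchet derivative of
the GRU state-transition map `F(h) = (1 - u(h)) ⊙ h + u(h) ⊙ c(h)` satisfies
`‖D F(h)‖₂ ≤ α + β ‖U_c‖₂`, where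
`α = δ_u (max_i |h_i| + max_i |c(h)_i|) ‖U_u‖₂ + max_i (1 - u(h)_i)` and
`β = (max_i u(h)_i)(δ_r ‖U_r‖₂ max_i |h_i| + max_i r(h)_i)`, with
`δ_u = max_i u(h)_i (1 - u(h)_i)` and `δ_r = max_i r(h)_i (1 - r(h)_i)`. -/
theorem gru_transition_deriv_norm_bound {n m : ℕ} (x : Fin m → ℝ)
    (Wr Wu Wc : Matrix (Fin n) (Fin m) ℝ) (Ur Uu Uc : Matrix (Fin n) (Fin n) ℝ)
    (br bu bc : EuclideanSpace ℝ (Fin n)) (h : EuclideanSpace ℝ (Fin n)) :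
    let r : EuclideanSpace ℝ (Fin n) → EuclideanSpace ℝ (Fin n) :=
      fun h => WithLp.toLp 2 (fun i => sigmoid (Wr.mulVec x i + Ur.mulVec h i + br i))
    let u : EuclideanSpace ℝ (Fin n) → EuclideanSpace ℝ (Fin n) :=
      fun h => WithLp.toLp 2 (fun i => sigmoid (Wu.mulVec x i + Uu.mulVec h i + bu i))
    let c : EuclideanSpace ℝ (Fin n) → EuclideanSpace ℝ (Fin n) :=
      fun h => WithLp.toLp 2 (fun i => Real.tanh (Wc.mulVec x i + Uc.mulVec (fun j => r h j * h j) i + bc i))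
    let F : EuclideanSpace ℝ (Fin n) → EuclideanSpace ℝ (Fin n) :=
      fun h => WithLp.toLp 2 (fun i => (1 - u h i) * h i + u h i * c h i)
    let δu : ℝ := ⨆ i, u h i * (1 - u h i)
    let δr : ℝ := ⨆ i, r h i * (1 - r h i)
    let α : ℝ := δu * ((⨆ i, |h i|) + ⨆ i, |c h i|) * opNorm2 Uu + ⨆ i, (1 - u h i)
    let β : ℝ := (⨆ i, u h i) * (δr * opNorm2 Ur * (⨆ i, |h i|) + ⨆ i, r h i)
    DifferentiableAt ℝ F h ∧ ‖fderiv ℝ F h‖ ≤ α + β * opNorm2 Uc := by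
  intro r u c F δu δr α β
  have hr : HasFDerivAt r
      (diagCLM (fun i => r h i * (1 - r h i)) ∘L toEuclideanCLM (𝕜 := ℝ) Ur) h :=
    hasFDerivAt_entrywise_affine _ _ _ _ fun i => hasDerivAt_sigmoid _
  have hu : HasFDerivAt u
      (diagCLM (fun i => u h i * (1 - u h i)) ∘L toEuclideanCLM (𝕜 := ℝ) Uu) h :=
    hasFDerivAt_entrywise_affine _ _ _ _ fun i => hasDerivAt_sigmoid _
  have hc := (hasFDerivAt_entrywise_affine (Wc.mulVec x) bc Uc _
    fun i => Real.hasDerivAt_tanh _).comp h (hr.hadamard (hasFDerivAt_id h))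
  -- `tanh' = 1 - tanh²`, read through `c h`
  replace hc : HasFDerivAt c
      ((diagCLM (fun i => 1 - c h i ^ 2) ∘L toEuclideanCLM (𝕜 := ℝ) Uc) ∘L _) h := hc
  have hF : HasFDerivAt F (gruFDeriv (u h) (r h) (c h) h (toEuclideanCLM (𝕜 := ℝ) Ur)
      (toEuclideanCLM (𝕜 := ℝ) Uu) (toEuclideanCLM (𝕜 := ℝ) Uc)) h := by
    refine (((hu.const_sub (toLp 2 1)).hadamard (hasFDerivAt_id h)).add
      (hu.hadamard hc)).congr_fderiv ?_
    ext v i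
    simp only [gruFDeriv, ofLp_sub, comp_id, id_eq, comp_neg, comp_add, sub_comp,
      _root_.add_apply, _root_.neg_apply, _root_.sub_apply, ContinuousLinearMap.comp_apply,
      PiLp.add_apply, PiLp.neg_apply, PiLp.sub_apply, diagCLM_apply, Pi.sub_apply, Pi.one_apply,
      ofLp_toEuclideanCLM]
    ring
  exact ⟨hF.differentiableAt, hF.fderiv ▸ norm_gruFDeriv_le _ _ _ _ (fun i => sigmoid_mem_Icc _)
    (fun i => sigmoid_mem_Icc _) fun i => (Real.abs_tanh_lt_one _).le⟩
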